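/- Let S and S' be c-colorable vertex sets of size k+1 in a graph G. The minimum length of a TAR(k)-reconfiguration sequence between S and S' equals twice the minimum length of a TJ-reconfiguration sequence between S and S' (where the minimum is infinity if no sequence exists). -/

import Mathlib

open Finset

variable {V : Type*}

/-- `S` is a `c`-colorable vertex set in `G`. -/
def ColSet (G : SimpleGraph V) (c : ℕ) (S : Finset V) : Prop :=
  (G.induce (S : Set V)).Colorable c

/-- One TAR(k) step between `c`-colorable sets. -/
def TARStep (G : SimpleGraph V) (c k : ℕ) [DecidableEq V] (A B : Finset V) : Prop :=
  ColSet G c A ∧ ColSet G c B ∧ k ≤ A.card ∧ k ≤ B.card ∧ (symmDiff A B).card = 1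

/-- One TJ step between `c`-colorable sets. -/
def TJStep (G : SimpleGraph V) (c : ℕ) [DecidableEq V] (A B : Finset V) : Prop :=
  ColSet G c A ∧ ColSet G c B ∧ (A \ B).card = 1 ∧ (B \ A).card = 1

/-- `l` is a TAR(k)-reconfiguration sequence from `S` to `S'`. -/
def TARSeq (G : SimpleGraph V) (c k : ℕ) [DecidableEq V] (S S' : Finset V)
    (l : List (Finset V)) : Prop :=
  l.head? = some S ∧ l.getLast? = some S' ∧ l.Chain' (TARStep G c k)

def TJSeq (G : SimpleGraph V) (c : ℕ) [DecidableEq V] (S S' : Finset V)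
    (l : List (Finset V)) : Prop :=
  l.head? = some S ∧ l.getLast? = some S' ∧ l.Chain' (TJStep G c)

def TARReach (G : SimpleGraph V) (c k : ℕ) [DecidableEq V] (S S' : Finset V) : Prop :=
  ∃ l, TARSeq G c k S S' l

def TJReach (G : SimpleGraph V) (c : ℕ) [DecidableEq V] (S S' : Finset V) : Prop :=
  ∃ l, TJSeq G c S S' l

/-- Length of a shortest TAR(k)-sequence (number of steps), `⊤` if none exists. -/
noncomputable def TARDist (G : SimpleGraph V) (c k : ℕ) [DecidableEq V]
    (S S' : Finset V) : ℕ∞ :=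
  sInf {n : ℕ∞ | ∃ l, TARSeq G c k S S' l ∧ (l.length : ℕ∞) = n + 1}

noncomputable def TJDist (G : SimpleGraph V) (c : ℕ) [DecidableEq V]
    (S S' : Finset V) : ℕ∞ :=
  sInf {n : ℕ∞ | ∃ l, TJSeq G c S S' l ∧ (l.length : ℕ∞) = n + 1}

/-- `S` is a maximal `c`-colorable set among subsets of `U`, of size exactly `k`
(`S` is "locked" in `G[U]`). -/
def LockedIn (G : SimpleGraph V) (c k : ℕ) (U S : Finset V) : Prop :=
  S.card = k ∧ ColSet G c S ∧ S ⊆ U ∧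
    ∀ T ⊆ U, ColSet G c T → S ⊆ T → T = S

/-- `S` is locked in `G` itself. -/
def Locked [Fintype V] (G : SimpleGraph V) (c k : ℕ) (S : Finset V) : Prop :=
  LockedIn G c k Finset.univ S

/-- `G` is an interval graph. -/
def IsIntervalGraph (G : SimpleGraph V) : Prop :=
  ∃ l r : V → ℝ, (∀ v, l v ≤ r v) ∧
    ∀ u v, G.Adj u v ↔ u ≠ v ∧ max (l u) (l v) ≤ min (r u) (r v)

/-- `G` is perfect: every induced subgraph has chromatic number equal to its
clique number, stated via the colorability/clique-free characterization. -/
def IsPerfect (G : SimpleGraph V) : Prop :=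
  ∀ (S : Set V) (c : ℕ), (G.induce S).Colorable c ↔ (G.induce S).CliqueFree (c + 1)

/-!
A TJ step `A → B` factors as the two TAR(k) steps `A → A ∩ B → B`, so `TARDist ≤ 2 · TJDist`.
Conversely, walk a TAR(k) sequence from its end `S'` back to `S`, keeping a colorable
`(k+1)`-set `Y` comparable with the current set `X` (`X ⊆ Y` or `Y ⊆ X`) and a TJ sequence from
`Y` to `S'`. At each TAR step `Y` is either kept or moved by one TJ step, and it only moves when
`|X|` gets closer to `k + 1`; hence `2 · (TJ steps) + dist |X| (k+1)` never exceeds the number of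
TAR steps walked. At `X = S` comparability forces `Y = S`.
-/

namespace Finset

variable {α : Type*} [DecidableEq α]

theorem exists_eq_insert_or_of_card_symmDiff_eq_one {A B : Finset α}
    (h : #(symmDiff A B) = 1) : (∃ v ∉ A, B = insert v A) ∨ ∃ v ∉ B, A = insert v B := by
  obtain ⟨v, hv⟩ := card_eq_one.1 h
  have hmem (x : α) : x ∈ symmDiff A B ↔ x = v := by rw [hv, mem_singleton]
  simp only [mem_symmDiff] at hmem
  by_cases hvA : v ∈ A
  · exact .inr ⟨v, by grind, by ext x; grind⟩
  · exact .inl ⟨v, hvA, by ext x; grind⟩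

theorem card_symmDiff_insert_self {a : α} {D : Finset α} (ha : a ∉ D) :
    #(symmDiff (insert a D) D) = 1 := by
  rw [card_eq_one]
  exact ⟨a, by ext x; simp only [mem_symmDiff, mem_insert, mem_singleton]; grind⟩

end Finset

section

variable {G : SimpleGraph V} {c k : ℕ}

theorem ColSet.mono {A B : Finset V} (hA : ColSet G c A) (hBA : B ⊆ A) : ColSet G c B :=
  hA.of_hom (G.induceHomOfLE (Finset.coe_subset.2 hBA)).toHom

def IsAnchor (G : SimpleGraph V) (c k : ℕ) (X Y : Finset V) : Prop :=
  ColSet G c Y ∧ #Y = k + 1 ∧ (X ⊆ Y ∨ Y ⊆ X)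

theorem IsAnchor.eq_of_card_eq {X Y : Finset V} (h : IsAnchor G c k X Y) (hX : #X = k + 1) :
    Y = X := by
  rcases h.2.2 with hXY | hYX
  · exact (eq_of_subset_of_card_le hXY (by rw [h.2.1, hX])).symm
  · exact eq_of_subset_of_card_le hYX (by rw [h.2.1, hX])

variable [DecidableEq V]

theorem TARStep.symm {A B : Finset V} (h : TARStep G c k A B) : TARStep G c k B A :=
  ⟨h.2.1, h.1, h.2.2.2.1, h.2.2.1, symmDiff_comm A B ▸ h.2.2.2.2⟩

theorem tarStep_insert_self {a : V} {D : Finset V} (h : ColSet G c (insert a D)) (ha : a ∉ D)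
    (hD : k ≤ #D) : TARStep G c k (insert a D) D :=
  ⟨h, h.mono (subset_insert a D), hD.trans (card_le_card (subset_insert a D)), hD,
    card_symmDiff_insert_self ha⟩

theorem tjStep_insert_insert {a b : V} {D : Finset V} (hA : ColSet G c (insert a D))
    (hB : ColSet G c (insert b D)) (ha : a ∉ D) (hb : b ∉ D) (hab : a ≠ b) :
    TJStep G c (insert a D) (insert b D) := by
  refine ⟨hA, hB, card_eq_one.2 ⟨a, ?_⟩, card_eq_one.2 ⟨b, ?_⟩⟩ <;>
    ext x <;> simp only [mem_sdiff, mem_insert, mem_singleton] <;> grind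

theorem TJStep.exists_eq_insert {A B : Finset V} (h : TJStep G c A B) :
    ∃ a b D, a ∉ D ∧ b ∉ D ∧ A = insert a D ∧ B = insert b D := by
  obtain ⟨a, ha⟩ := card_eq_one.1 h.2.2.1
  obtain ⟨b, hb⟩ := card_eq_one.1 h.2.2.2
  refine ⟨a, b, A ∩ B, ?_, ?_, ?_, ?_⟩
  · have := ha ▸ mem_singleton_self a
    grind
  · have := hb ▸ mem_singleton_self b
    grind
  · rw [insert_eq, ← ha, sdiff_union_inter]
  · rw [insert_eq, ← hb, inter_comm, sdiff_union_inter]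

theorem TJStep.card_eq {A B : Finset V} (h : TJStep G c A B) : #A = #B := by
  obtain ⟨a, b, D, ha, hb, rfl, rfl⟩ := h.exists_eq_insert
  rw [card_insert_of_notMem ha, card_insert_of_notMem hb]

theorem TARSeq.cons {A B T : Finset V} {l : List (Finset V)} (h : TARStep G c k A B)
    (hl : TARSeq G c k B T l) : TARSeq G c k A T (A :: l) := by
  obtain ⟨hhead, hlast, hchain⟩ := hl
  obtain ⟨B', l⟩ := l
  · simp at hhead
  · obtain rfl := Option.some_inj.1 hhead
    exact ⟨rfl, by rwa [List.getLast?_cons_cons], List.isChain_cons_cons.2 ⟨h, hchain⟩⟩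

theorem TJSeq.cons {A B T : Finset V} {t : List (Finset V)} (h : TJStep G c A B)
    (ht : TJSeq G c B T t) : TJSeq G c A T (A :: t) := by
  obtain ⟨hhead, hlast, hchain⟩ := ht
  obtain ⟨B', t⟩ := t
  · simp at hhead
  · obtain rfl := Option.some_inj.1 hhead
    exact ⟨rfl, by rwa [List.getLast?_cons_cons], List.isChain_cons_cons.2 ⟨h, hchain⟩⟩

theorem TARSeq.tail {A B T : Finset V} {l : List (Finset V)}
    (h : TARSeq G c k A T (A :: B :: l)) : TARStep G c k A B ∧ TARSeq G c k B T (B :: l) :=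
  ⟨(List.isChain_cons_cons.1 h.2.2).1,
    rfl, List.getLast?_cons_cons ▸ h.2.1, (List.isChain_cons_cons.1 h.2.2).2⟩

theorem TJSeq.tail {A B T : Finset V} {t : List (Finset V)}
    (h : TJSeq G c A T (A :: B :: t)) : TJStep G c A B ∧ TJSeq G c B T (B :: t) :=
  ⟨(List.isChain_cons_cons.1 h.2.2).1,
    rfl, List.getLast?_cons_cons ▸ h.2.1, (List.isChain_cons_cons.1 h.2.2).2⟩

theorem TJSeq.exists_tarSeq {A T : Finset V} {t : List (Finset V)} (ht : TJSeq G c A T t)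
    (hA : #A = k + 1) : ∃ l, TARSeq G c k A T l ∧ l.length + 1 = 2 * t.length := by
  induction t generalizing A with
  | nil => simp [TJSeq] at ht
  | cons A' t ih =>
    obtain rfl := Option.some_inj.1 ht.1
    rcases t with _ | ⟨B, t⟩
    · exact ⟨[A'], ⟨rfl, ht.2.1, List.isChain_singleton A'⟩, rfl⟩
    obtain ⟨hAB, hBT⟩ := ht.tail
    obtain ⟨l, hl, hlen⟩ := ih hBT (hAB.card_eq ▸ hA)
    obtain ⟨a, b, D, ha, hb, rfl, rfl⟩ := hAB.exists_eq_insert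
    have hD : k ≤ #D := by rw [card_insert_of_notMem ha] at hA; omega
    refine ⟨insert a D :: D :: l, (hl.cons (tarStep_insert_self hAB.2.1 hb hD).symm).cons
      (tarStep_insert_self hAB.1 ha hD), ?_⟩
    simp only [List.length_cons] at hlen ⊢
    omega

theorem IsAnchor.exists_of_tarStep_erase {v : V} {Z Y' : Finset V} (hv : v ∉ Z)
    (h : TARStep G c k (insert v Z) Z) (hY' : IsAnchor G c k Z Y') :
    ∃ Y, IsAnchor G c k (insert v Z) Y ∧
      (Y = Y' ∨ TJStep G c Y Y' ∧ (#(insert v Z)).dist (k + 1) < (#Z).dist (k + 1)) := by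
  obtain ⟨hcol, hcard, hcomp⟩ := hY'
  by_cases hY'Z : Y' ⊆ Z
  · exact ⟨Y', ⟨hcol, hcard, .inr (hY'Z.trans (subset_insert v Z))⟩, .inl rfl⟩
  have hZY' : Z ⊂ Y' := (hcomp.resolve_right hY'Z).ssubset_of_not_subset hY'Z
  by_cases hvY' : v ∈ Y'
  · exact ⟨Y', ⟨hcol, hcard, .inl (insert_subset hvY' hZY'.subset)⟩, .inl rfl⟩
  have hZ : #Z = k := by have := card_lt_card hZY'; have := h.2.2.2.1; omega
  obtain ⟨w, hw, rfl⟩ := exists_eq_insert_iff.2 ⟨hZY'.subset, by omega⟩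
  have hvw : v ≠ w := by rintro rfl; exact hvY' (mem_insert_self v Z)
  refine ⟨insert v Z, ⟨h.1, by rw [card_insert_of_notMem hv, hZ], .inl subset_rfl⟩,
    .inr ⟨tjStep_insert_insert h.1 hcol hv hw hvw, ?_⟩⟩
  simp only [Nat.dist, card_insert_of_notMem hv, hZ]
  omega

theorem IsAnchor.exists_of_tarStep_insert {v : V} {X Y' : Finset V} (hv : v ∉ X)
    (h : TARStep G c k X (insert v X)) (hY' : IsAnchor G c k (insert v X) Y') :
    ∃ Y, IsAnchor G c k X Y ∧
      (Y = Y' ∨ TJStep G c Y Y' ∧ (#X).dist (k + 1) < (#(insert v X)).dist (k + 1)) := by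
  obtain ⟨hcol, hcard, hcomp⟩ := hY'
  by_cases hZY' : insert v X ⊆ Y'
  · exact ⟨Y', ⟨hcol, hcard, .inl ((subset_insert v X).trans hZY')⟩, .inl rfl⟩
  have hY'Z : Y' ⊂ insert v X := (hcomp.resolve_left hZY').ssubset_of_not_subset hZY'
  by_cases hvY' : v ∉ Y'
  · exact ⟨Y', ⟨hcol, hcard, .inr ((subset_insert_iff_of_notMem hvY').1 hY'Z.subset)⟩, .inl rfl⟩
  rw [not_not] at hvY'
  obtain ⟨u, huZ, huY'⟩ := not_subset.1 hZY'
  have huv : u ≠ v := by rintro rfl; exact huY' hvY'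
  have hsub : insert u (Y'.erase v) ⊆ X := by
    refine insert_subset (by grind) fun x hx => ?_
    have := hY'Z.subset (mem_of_mem_erase hx)
    grind
  have hu : u ∉ Y'.erase v := fun hu => huY' (mem_of_mem_erase hu)
  refine ⟨insert u (Y'.erase v), ⟨h.1.mono hsub, ?_, .inr hsub⟩, .inr ⟨?_, ?_⟩⟩
  · rw [card_insert_of_notMem hu, card_erase_of_mem hvY', hcard]
    rfl
  · have := tjStep_insert_insert (h.1.mono hsub) (by rwa [insert_erase hvY']) hu
      (notMem_erase v Y') huv
    rwa [insert_erase hvY'] at this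
  · have := card_lt_card hY'Z
    simp only [Nat.dist, card_insert_of_notMem hv] at this ⊢
    omega

theorem TARStep.dist_card_le {X Z : Finset V} (h : TARStep G c k X Z) (n : ℕ) :
    (#X).dist n ≤ (#Z).dist n + 1 := by
  rcases exists_eq_insert_or_of_card_symmDiff_eq_one h.2.2.2.2 with ⟨v, hv, rfl⟩ | ⟨v, hv, rfl⟩ <;>
  · simp only [Nat.dist, card_insert_of_notMem hv]
    omega

theorem IsAnchor.exists_of_tarStep {X Z Y' : Finset V} (h : TARStep G c k X Z)
    (hY' : IsAnchor G c k Z Y') :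
    ∃ Y, IsAnchor G c k X Y ∧
      (Y = Y' ∨ TJStep G c Y Y' ∧ (#X).dist (k + 1) < (#Z).dist (k + 1)) := by
  rcases exists_eq_insert_or_of_card_symmDiff_eq_one h.2.2.2.2 with ⟨v, hv, rfl⟩ | ⟨v, hv, rfl⟩
  · exact hY'.exists_of_tarStep_insert hv h
  · exact hY'.exists_of_tarStep_erase hv h

theorem TARSeq.exists_anchor_tjSeq {X S' : Finset V} {l : List (Finset V)}
    (hl : TARSeq G c k X S' (X :: l)) (hS' : ColSet G c S') (hcard' : #S' = k + 1) :
    ∃ Y t, IsAnchor G c k X Y ∧ TJSeq G c Y S' t ∧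
      2 * t.length + (#X).dist (k + 1) ≤ l.length + 2 := by
  induction l generalizing X with
  | nil =>
    obtain rfl : X = S' := Option.some_inj.1 hl.2.1
    exact ⟨X, [X], ⟨hS', hcard', .inl subset_rfl⟩, ⟨rfl, rfl, List.isChain_singleton X⟩,
      by simp [hcard']⟩
  | cons Z l ih =>
    obtain ⟨hXZ, hZS'⟩ := hl.tail
    obtain ⟨Y', t, hY', ht, hlen⟩ := ih hZS'
    have hdist := hXZ.dist_card_le (k + 1)
    obtain ⟨Y, hY, rfl | ⟨hYY', hlt⟩⟩ := hY'.exists_of_tarStep hXZ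
    · exact ⟨Y, t, hY, ht, by simp only [List.length_cons] at hlen ⊢; omega⟩
    · exact ⟨Y, Y :: t, hY, ht.cons hYY', by simp only [List.length_cons] at hlen ⊢; omega⟩

theorem TARSeq.exists_tjSeq {S S' : Finset V} {l : List (Finset V)}
    (hl : TARSeq G c k S S' l) (hS' : ColSet G c S') (hcard : #S = k + 1)
    (hcard' : #S' = k + 1) : ∃ t, TJSeq G c S S' t ∧ 2 * t.length ≤ l.length + 1 := by
  obtain ⟨l, rfl⟩ := List.head?_eq_some_iff.1 hl.1
  obtain ⟨Y, t, hY, ht, hlen⟩ := hl.exists_anchor_tjSeq hS' hcard'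
  obtain rfl := hY.eq_of_card_eq hcard
  exact ⟨t, ht, by simpa [hcard] using hlen⟩

theorem tjDist_le {S S' : Finset V} {t : List (Finset V)} {n : ℕ} (ht : TJSeq G c S S' t)
    (hn : t.length = n + 1) : TJDist G c S S' ≤ n :=
  sInf_le ⟨t, ht, by rw [hn]; push_cast; rfl⟩

theorem tarDist_le {S S' : Finset V} {l : List (Finset V)} {n : ℕ} (hl : TARSeq G c k S S' l)
    (hn : l.length = n + 1) : TARDist G c k S S' ≤ n :=
  sInf_le ⟨l, hl, by rw [hn]; push_cast; rfl⟩

theorem tarDist_le_two_mul_tjDist {S S' : Finset V} (hcard : #S = k + 1) :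
    TARDist G c k S S' ≤ 2 * TJDist G c S S' := by
  rcases Set.eq_empty_or_nonempty
    {n : ℕ∞ | ∃ t, TJSeq G c S S' t ∧ (t.length : ℕ∞) = n + 1} with h | h
  · rw [TJDist, h, sInf_empty, ENat.mul_top two_ne_zero]
    exact le_top
  obtain ⟨t, ht, hlen⟩ := csInf_mem h
  obtain ⟨l, hl, hlt⟩ := ht.exists_tarSeq hcard
  obtain ⟨t', rfl⟩ := List.head?_eq_some_iff.1 ht.1
  have hd : TJDist G c S S' = t'.length := by
    rw [List.length_cons, Nat.cast_add, Nat.cast_one] at hlen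
    exact (WithTop.add_right_cancel ENat.one_ne_top hlen).symm
  rw [hd]
  exact_mod_cast tarDist_le hl (by simp only [List.length_cons] at hlt; omega)

theorem two_mul_tjDist_le_tarDist {S S' : Finset V} (hS' : ColSet G c S') (hcard : #S = k + 1)
    (hcard' : #S' = k + 1) : 2 * TJDist G c S S' ≤ TARDist G c k S S' := by
  refine le_sInf ?_
  rintro m ⟨l, hl, hlen⟩
  lift m to ℕ using by rintro rfl; simp at hlen
  obtain ⟨t, ht, htl⟩ := hl.exists_tjSeq hS' hcard hcard'
  obtain ⟨t', rfl⟩ := List.head?_eq_some_iff.1 ht.1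
  have hlm : l.length = m + 1 := by exact_mod_cast hlen
  calc 2 * TJDist G c S S' ≤ 2 * (t'.length : ℕ∞) := by gcongr; exact tjDist_le ht rfl
    _ ≤ m := by simp only [List.length_cons] at htl; exact_mod_cast (by omega)

end

theorem tar_dist_eq_two_mul_tj_dist_general {V : Type*} [DecidableEq V] (G : SimpleGraph V)
    (c k : ℕ) (S S' : Finset V) (hS' : ColSet G c S')
    (hcard : S.card = k + 1) (hcard' : S'.card = k + 1) :
    TARDist G c k S S' = 2 * TJDist G c S S' :=
  le_antisymm (tarDist_le_two_mul_tjDist hcard) (two_mul_tjDist_le_tarDist hS' hcard hcard')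

theorem tar_dist_eq_two_mul_tj_dist {V : Type*} [DecidableEq V] (G : SimpleGraph V)
    (c k : ℕ) (S S' : Finset V) (hS : ColSet G c S) (hS' : ColSet G c S')
    (hcard : S.card = k + 1) (hcard' : S'.card = k + 1) :
    TARDist G c k S S' = 2 * TJDist G c S S' :=
  tar_dist_eq_two_mul_tj_dist_general G c k S S' hS' hcard hcard'
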